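/- Let x ∈ W and let 0 ≤ α < β. Then OT_∞(α·δ_x, β·δ_x) = d(x, Δ), where δ_x is the Dirac measure at x. -/

import Mathlib

/-! Common setup: the birth-death plane, Radon measures, partial optimal transport. -/

noncomputable section

open MeasureTheory Topology Filter Set
open scoped ENNReal

/-- The ambient plane `ℝ²` (with the sup-norm, i.e. `q = ∞`). -/
abbrev P2 : Type := ℝ × ℝ

/-- The birth-death plane `W = {(b,d) : b < d}`. -/
def Wbd : Set P2 := {p | p.1 < p.2}

/-- The closure `W̄` of the birth-death plane. -/
def Wcl : Set P2 := closure Wbd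

/-- The diagonal `Δ`. -/
def Diag : Set P2 := {p | p.1 = p.2}

/-- Distance from a point to the diagonal, `‖x - Δ‖`. -/
def distDiag (x : P2) : ℝ := Metric.infDist x Diag

/-- The pseudometric `d(x,y) = min(‖x-y‖, ‖x-Δ‖ + ‖y-Δ‖)` on `W̄`. -/
def dW (x y : P2) : ℝ := min (dist x y) (distDiag x + distDiag y)

/-- The support of a Borel measure: points all of whose neighborhoods have
positive measure. -/
def msupport {α : Type*} [TopologicalSpace α] [MeasurableSpace α] (μ : Measure α) : Set α :=
  {x | ∀ U ∈ 𝓝 x, 0 < μ U}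

/-- `μ` is a Radon measure on the subspace `S`: it vanishes off `S`, is inner regular
(on relatively open sets) by compact sets, outer regular (by relatively open sets), and finite
on compact subsets of `S`. -/
def RadonOn {α : Type*} [TopologicalSpace α] [MeasurableSpace α] (S : Set α)
    (μ : Measure α) : Prop :=
  μ Sᶜ = 0 ∧
  (∀ U : Set α, IsOpen U → μ (U ∩ S) = ⨆ (K : Set α) (_ : K ⊆ U ∩ S) (_ : IsCompact K), μ K) ∧
  (∀ E : Set α, E ⊆ S → MeasurableSet E →
    μ E = ⨅ (U : Set α) (_ : IsOpen U) (_ : E ⊆ U), μ (U ∩ S)) ∧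
  (∀ K : Set α, K ⊆ S → IsCompact K → μ K < ⊤)

/-- The set `M` of Radon measures on `W`. -/
def MRadon : Set (Measure P2) := {μ | RadonOn Wbd μ}

/-- `pers_∞(μ) = sup{‖x-Δ‖ : x ∈ spt μ}` (valued in `ℝ≥0∞`). -/
def persInf (μ : Measure P2) : ℝ≥0∞ := ⨆ x ∈ msupport μ, ENNReal.ofReal (distDiag x)

/-- The space `M^∞` of Radon measures on `W` with finite `∞`-persistence. -/
def MInf : Set (Measure P2) := {μ | RadonOn Wbd μ ∧ persInf μ < ⊤}

/-- A coupling (admissible transport plan) between `μ` and `ν`: a Radon measure on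
`W̄ × W̄` whose marginals restricted to Borel subsets of `W` are `μ` and `ν`. -/
def IsCoupling (π : Measure (P2 × P2)) (μ ν : Measure P2) : Prop :=
  RadonOn (Wcl ×ˢ Wcl) π ∧
  (∀ A : Set P2, A ⊆ Wbd → MeasurableSet A → π (A ×ˢ Wcl) = μ A) ∧
  (∀ B : Set P2, B ⊆ Wbd → MeasurableSet B → π (Wcl ×ˢ B) = ν B)

/-- The `∞`-cost of a transport plan: `sup {d(x,y) : (x,y) ∈ spt π}`. -/
def costInf (π : Measure (P2 × P2)) : ℝ≥0∞ :=
  ⨆ p ∈ msupport π, ENNReal.ofReal (dW p.1 p.2)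

/-- The partial `∞`-optimal transport distance. -/
def OT (μ ν : Measure P2) : ℝ≥0∞ :=
  ⨅ (π : Measure (P2 × P2)) (_ : IsCoupling π μ ν), costInf π

/-- `W_ε = {(x,y) : y - x > ε}`. -/
def Weps (ε : ℝ) : Set P2 := {p | p.2 - p.1 > ε}

/-- The space `M_f^∞` of off-diagonally finite measures. -/
def Mf : Set (Measure P2) := {μ | μ ∈ MInf ∧ ∀ ε : ℝ, 0 < ε → μ (Weps ε) < ⊤}

/-- The space `M_fin^∞` of finite measures in `M^∞`. -/
def Mfin : Set (Measure P2) := {μ | μ ∈ MInf ∧ μ Wbd < ⊤}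

/-- `f ∈ C_c(W)`: a continuous function, compactly supported, with support contained
in the open set `W` (extended by zero to the plane). -/
def IsCcW (f : P2 → ℝ) : Prop :=
  Continuous f ∧ HasCompactSupport f ∧ tsupport f ⊆ Wbd

/-- Convergence of a sequence of measures to `μ` in the distance `OT_∞`. -/
def OTConv (u : ℕ → Measure P2) (μ : Measure P2) : Prop :=
  Tendsto (fun n => OT (u n) μ) atTop (𝓝 0)

/-
The upper bound is the plan that keeps the common mass `a` at `x` and brings the excess `b - a`
from a point of the diagonal, at cost `d(x, Δ)`. Conversely, since `W̄ \ W` is the diagonal, any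
coupling whose second marginal has more mass at `x` than the first has mass on all of `W` must
transport some mass from `Δ` to `x`, so its support contains a pair of cost at least `d(x, Δ)`.
-/

lemma isOpen_Wbd : IsOpen Wbd := isOpen_lt continuous_fst continuous_snd

lemma Wbd_subset_Wcl : Wbd ⊆ Wcl := subset_closure

lemma Diag_subset_Wcl : Diag ⊆ Wcl := by
  rintro ⟨t, _⟩ (rfl : t = _)
  exact map_mem_closure (s := Ioi t) (Continuous.prodMk_right t) (by simp [closure_Ioi])
    fun _ h => h

lemma Wcl_subset_Wbd_union_Diag : Wcl ⊆ Wbd ∪ Diag := fun p hp =>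
  (show p.1 ≤ p.2 from closure_lt_subset_le continuous_fst continuous_snd hp).lt_or_eq

lemma dW_self (x : P2) : dW x x = 0 :=
  le_antisymm ((min_le_left _ _).trans_eq (dist_self x))
    (le_min dist_nonneg (add_nonneg Metric.infDist_nonneg Metric.infDist_nonneg))

lemma dW_le_distDiag_of_mem_Diag {z : P2} (hz : z ∈ Diag) (x : P2) : dW z x ≤ distDiag x :=
  (min_le_right _ _).trans_eq (by rw [distDiag, Metric.infDist_zero_of_mem hz, zero_add])

lemma distDiag_le_dW_of_mem_Diag {z : P2} (hz : z ∈ Diag) (x : P2) : distDiag x ≤ dW z x :=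
  le_min (dist_comm x z ▸ Metric.infDist_le_dist_of_mem hz)
    (le_add_of_nonneg_left Metric.infDist_nonneg)

lemma msupport_eq_support {α : Type*} [TopologicalSpace α] [MeasurableSpace α]
    (μ : Measure α) : msupport μ = μ.support :=
  ext fun x => (Measure.mem_support_iff_forall x).symm

lemma radonOn_of_finite {α : Type*} [TopologicalSpace α] [T1Space α] [MeasurableSpace α]
    {S F : Set α} {μ : Measure α} [IsFiniteMeasure μ] (hF : F.Finite) (hFS : F ⊆ S)
    (hμF : μ Fᶜ = 0) : RadonOn S μ := by
  refine ⟨measure_mono_null (compl_subset_compl.2 hFS) hμF, fun U _ => ?_, fun E _ _ => ?_,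
    fun K _ _ => measure_lt_top μ K⟩
  · refine le_antisymm ?_ (iSup₂_le fun K hK => iSup_le fun _ => measure_mono hK)
    rw [← measure_inter_conull hμF]
    exact le_iSup₂_of_le _ inter_subset_left
      (le_iSup_of_le (hF.inter_of_right _).isCompact le_rfl)
  · refine le_antisymm
      (le_iInf₂ fun V _ => le_iInf fun hEV => measure_mono (subset_inter hEV ‹_›)) ?_
    have hUF : (F \ E)ᶜ ∩ S ∩ F = E ∩ F := by
      ext p
      constructor
      · rintro ⟨⟨hp, -⟩, hpF⟩
        exact ⟨by_contra fun hpE => hp ⟨hpF, hpE⟩, hpF⟩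
      · rintro ⟨hpE, hpF⟩
        exact ⟨⟨fun h => h.2 hpE, hFS hpF⟩, hpF⟩
    refine iInf₂_le_of_le _ hF.sdiff.isClosed.isOpen_compl (iInf_le_of_le
      (fun p hpE hp => hp.2 hpE) (le_of_eq ?_))
    rw [← measure_inter_conull hμF, hUF, measure_inter_conull hμF]

lemma costInf_le {π : Measure (P2 × P2)} {F : Set (P2 × P2)} (hF : IsClosed F)
    (hπF : π Fᶜ = 0) {c : ℝ} (hc : ∀ p ∈ F, dW p.1 p.2 ≤ c) :
    costInf π ≤ ENNReal.ofReal c := by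
  refine iSup₂_le fun p hp => ENNReal.ofReal_le_ofReal (hc p ?_)
  rw [msupport_eq_support] at hp
  exact Measure.support_subset_of_isClosed hF (mem_ae_iff.2 hπF) hp

lemma le_costInf {π : Measure (P2 × P2)} {p : P2 × P2} (hp : p ∈ msupport π) :
    ENNReal.ofReal (dW p.1 p.2) ≤ costInf π :=
  le_iSup₂ (f := fun (q : P2 × P2) (_ : q ∈ msupport π) => ENNReal.ofReal (dW q.1 q.2)) p hp

lemma OT_le_costInf {π : Measure (P2 × P2)} {μ ν : Measure P2} (hπ : IsCoupling π μ ν) :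
    OT μ ν ≤ costInf π :=
  iInf₂_le π hπ

lemma isCoupling_smul_dirac {x z : P2} (hxW : x ∈ Wcl) (hz : z ∈ Diag) {a b : ℝ≥0∞}
    (hab : a ≤ b) (hb : b ≠ ⊤) :
    IsCoupling (a • Measure.dirac (x, x) + (b - a) • Measure.dirac (z, x))
      (a • Measure.dirac x) (b • Measure.dirac x) := by
  have hzW : z ∈ Wcl := Diag_subset_Wcl hz
  have ha : a ≠ ⊤ := ne_top_of_le_ne_top hb hab
  have : IsFiniteMeasure (a • Measure.dirac (x, x) + (b - a) • Measure.dirac (z, x)) :=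
    ⟨by simp [add_tsub_cancel_of_le hab, hb.lt_top]⟩
  refine ⟨radonOn_of_finite (F := {(x, x), (z, x)}) (toFinite _) ?_ ?_, fun A hA _ => ?_,
    fun B _ _ => ?_⟩
  · simp [insert_subset_iff, hxW, hzW]
  · simp
  · have hzA : z ∉ A := fun h => (hA h : z.1 < z.2).ne hz
    by_cases hxA : x ∈ A <;> simp [Measure.dirac_apply, hxW, hzA, hxA]
  · by_cases hxB : x ∈ B <;> simp [Measure.dirac_apply, hxW, hzW, hxB, add_tsub_cancel_of_le hab]

lemma IsCoupling.measure_le_add_diag {π : Measure (P2 × P2)} {μ ν : Measure P2}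
    (hπ : IsCoupling π μ ν) {B : Set P2} (hB : B ⊆ Wbd) (hBm : MeasurableSet B) :
    ν B ≤ μ Wbd + π (Diag ×ˢ B) := by
  have hcover : Wcl ×ˢ B ⊆ Wbd ×ˢ Wcl ∪ Diag ×ˢ B := by
    rintro ⟨s, t⟩ ⟨hs, ht⟩
    rcases Wcl_subset_Wbd_union_Diag hs with hs | hs
    · exact Or.inl ⟨hs, Wbd_subset_Wcl (hB ht)⟩
    · exact Or.inr ⟨hs, ht⟩
  calc ν B = π (Wcl ×ˢ B) := (hπ.2.2 B hB hBm).symm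
    _ ≤ π (Wbd ×ˢ Wcl) + π (Diag ×ˢ B) := (measure_mono hcover).trans (measure_union_le _ _)
    _ = μ Wbd + π (Diag ×ˢ B) := by rw [hπ.2.1 Wbd subset_rfl isOpen_Wbd.measurableSet]

lemma distDiag_le_OT {μ ν : Measure P2} {x : P2} (hx : x ∈ Wbd) (hμν : μ Wbd < ν {x}) :
    ENNReal.ofReal (distDiag x) ≤ OT μ ν := by
  refine le_iInf₂ fun π hπ => ?_
  have hpos : 0 < π (Diag ×ˢ {x}) := by
    refine pos_iff_ne_zero.2 fun h0 => hμν.not_ge ?_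
    simpa [h0] using hπ.measure_le_add_diag (singleton_subset_iff.2 hx) (measurableSet_singleton x)
  obtain ⟨p, ⟨hpDiag, hpx⟩, hp⟩ := Measure.nonempty_inter_support_of_pos hpos
  rw [← msupport_eq_support] at hp
  calc ENNReal.ofReal (distDiag x) ≤ ENNReal.ofReal (dW p.1 p.2) := ENNReal.ofReal_le_ofReal
        (mem_singleton_iff.1 hpx ▸ distDiag_le_dW_of_mem_Diag hpDiag x)
    _ ≤ costInf π := le_costInf hp

theorem OT_smul_dirac_of_lt {x : P2} (hx : x ∈ Wbd) {a b : ℝ≥0∞} (hab : a < b) (hb : b ≠ ⊤) :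
    OT (a • Measure.dirac x) (b • Measure.dirac x) = ENNReal.ofReal (distDiag x) := by
  refine le_antisymm ?_ (distDiag_le_OT hx (by simpa [hx] using hab))
  have hz : ((x.1, x.1) : P2) ∈ Diag := rfl
  refine (OT_le_costInf (isCoupling_smul_dirac (Wbd_subset_Wcl hx) hz hab.le hb)).trans ?_
  refine costInf_le (toFinite {(x, x), ((x.1, x.1), x)}).isClosed (by simp) ?_
  rintro p (rfl | rfl)
  · exact (dW_self x).trans_le Metric.infDist_nonneg
  · exact dW_le_distDiag_of_mem_Diag hz x

/-- For `x ∈ W` and `0 ≤ α < β`,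
`OT_∞(α·δ_x, β·δ_x) = d(x, Δ)`. -/
theorem OT_dirac_scalings (x : P2) (hx : x ∈ Wbd) (α β : ℝ) (hα : 0 ≤ α) (hαβ : α < β) :
    OT (ENNReal.ofReal α • Measure.dirac x) (ENNReal.ofReal β • Measure.dirac x)
      = ENNReal.ofReal (distDiag x) :=
  OT_smul_dirac_of_lt hx ((ENNReal.ofReal_lt_ofReal_iff (hα.trans_lt hαβ)).2 hαβ)
    ENNReal.ofReal_ne_top
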